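/- Every x ∈ (N̄^q_{Δ⁻}) has a unique representation x = l·s^{(−1)} + ∑_{k=0}^∞ (λ_k − l) s^{(k)}, where λ_k = τ_k(x), l = lim_{k→∞} τ_k(x), and the partial sums converge in the norm ‖x‖ = sup_n |τ_n(x)|; hence the set {s^{(−1)}} ∪ {s^{(k)} : k ∈ ℕ} is a Schauder basis of (N̄^q_{Δ⁻}). -/

import Mathlib

open Finset Filter Topology

namespace NqDelta

noncomputable section

/-- `Qs q n = ∑_{i=0}^n q i`. -/
def Qs (q : ℕ → ℝ) (n : ℕ) : ℝ := ∑ i ∈ Finset.range (n + 1), q i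

/-- The difference operator `(Δ⁻ x)_k = x_{k-1} - x_k`, with `x_{-1} = 0`. -/
def deltaM (x : ℕ → ℂ) (k : ℕ) : ℂ := (if k = 0 then 0 else x (k - 1)) - x k

/-- `τ_n(x) = (1/Q_n) ∑_{k=0}^n q_k (Δ⁻ x)_k`. -/
def tau (q : ℕ → ℝ) (x : ℕ → ℂ) (n : ℕ) : ℂ :=
  ((Qs q n : ℂ))⁻¹ * ∑ k ∈ Finset.range (n + 1), (q k : ℂ) * deltaM x k

/-- The space `(N̄^q_{Δ⁻})_0 = {x : τ_n(x) → 0}`. -/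
def Nzero (q : ℕ → ℝ) : Set (ℕ → ℂ) := {x | Tendsto (tau q x) atTop (𝓝 0)}

/-- The space `(N̄^q_{Δ⁻}) = {x : (τ_n(x)) converges}`. -/
def Nconv (q : ℕ → ℝ) : Set (ℕ → ℂ) := {x | ∃ l : ℂ, Tendsto (tau q x) atTop (𝓝 l)}

/-- The space `(N̄^q_{Δ⁻})_∞ = {x : sup_n |τ_n(x)| < ∞}`. -/
def Ninf (q : ℕ → ℝ) : Set (ℕ → ℂ) := {x | ∃ M : ℝ, ∀ n, ‖tau q x n‖ ≤ M}

/-- The norm `‖x‖ = sup_n |τ_n(x)|`. -/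
def Nnorm (q : ℕ → ℝ) (x : ℕ → ℂ) : ℝ := ⨆ n, ‖tau q x n‖

/-- The `m`-th section `x^{[m]} = (x_0, …, x_m, 0, 0, …)` of a sequence `x`. -/
def secTrunc (x : ℕ → ℂ) (m : ℕ) : ℕ → ℂ := fun k => if k ≤ m then x k else 0

/-- The sequence `s^{(k)}`: `s^{(k)}_n = Q_k(1/q_{k+1} - 1/q_k)` for `n > k`,
`s^{(k)}_k = -Q_k/q_k`, and `s^{(k)}_n = 0` for `n < k`. -/
def sseq (q : ℕ → ℝ) (k : ℕ) : ℕ → ℂ := fun n =>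
  if n < k then 0
  else if n = k then ((-(Qs q k / q k) : ℝ) : ℂ)
  else ((Qs q k * (1 / q (k + 1) - 1 / q k) : ℝ) : ℂ)

/-- The sequence `s^{(-1)}`, with `s^{(-1)}_n = ∑_{k=0}^{n-1} Q_k(1/q_{k+1} - 1/q_k) - Q_n/q_n`. -/
def sminus (q : ℕ → ℝ) : ℕ → ℂ := fun n =>
  (((∑ k ∈ Finset.range n, Qs q k * (1 / q (k + 1) - 1 / q k)) - Qs q n / q n : ℝ) : ℂ)

/-- The matrix `C = (c_{nk})` associated with a sequence `a`. -/
def Cmat (q : ℕ → ℝ) (a : ℕ → ℂ) (n k : ℕ) : ℂ :=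
  if k < n then ((Qs q k * (1 / q (k + 1) - 1 / q k) : ℝ) : ℂ) * ∑ j ∈ Finset.Icc (k + 1) n, a j
  else if k = n then -(((Qs q n / q n : ℝ) : ℂ) * a n)
  else 0

/-- `exprD q a m = ∑_{k=0}^{m-1} Q_k |(1/q_{k+1} - 1/q_k) ∑_{j=k+1}^m a_j| + |Q_m a_m / q_m|`. -/
def exprD (q : ℕ → ℝ) (a : ℕ → ℂ) (m : ℕ) : ℝ :=
  (∑ k ∈ Finset.range m,
      Qs q k * ‖((1 / q (k + 1) - 1 / q k : ℝ) : ℂ) * ∑ j ∈ Finset.Icc (k + 1) m, a j‖) +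
    ‖((Qs q m / q m : ℝ) : ℂ) * a m‖

/-- The space `c₀` of null complex sequences. -/
def czero : Set (ℕ → ℂ) := {y | Tendsto y atTop (𝓝 0)}

/-- The space `c` of convergent complex sequences. -/
def cconv : Set (ℕ → ℂ) := {y | ∃ l : ℂ, Tendsto y atTop (𝓝 l)}

/-- The space `ℓ_∞` of bounded complex sequences. -/
def linf : Set (ℕ → ℂ) := {y | ∃ M : ℝ, ∀ n, ‖y n‖ ≤ M}

/-- `A ∈ (X, Y)`: for every `x ∈ X` every row series `A_n(x)` converges and `Ax ∈ Y`. -/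
def matMem (A : ℕ → ℕ → ℂ) (X Y : Set (ℕ → ℂ)) : Prop :=
  ∀ x ∈ X, ∃ y ∈ Y, ∀ n,
    Tendsto (fun m => ∑ k ∈ Finset.range (m + 1), A n k * x k) atTop (𝓝 (y n))

/-- Condition (C): `sup_{m,n} exprD q (A n) m < ∞`. -/
def condC (q : ℕ → ℝ) (A : ℕ → ℕ → ℂ) : Prop := ∃ M : ℝ, ∀ m n, exprD q (A n) m ≤ M

/-- `‖A‖^{(s)} = sup_{n > s} sup_m exprD q (A n) m`. -/
def normS (q : ℕ → ℝ) (A : ℕ → ℕ → ℂ) (s : ℕ) : ℝ :=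
  ⨆ n, ⨆ (_ : s < n), ⨆ m, exprD q (A n) m

/-- The supremum distance `sup_n |y_n - z_n|` between two sequences. -/
def supDist (y z : ℕ → ℂ) : ℝ := ⨆ n, ‖y n - z n‖

/-- The Hausdorff measure of noncompactness of `S` as a subset of the metric space `Y`
(with the supremum metric): `inf {ε > 0 : S has a finite ε-net in Y}`. -/
def chiIn (Y S : Set (ℕ → ℂ)) : ℝ :=
  sInf {ε : ℝ | 0 < ε ∧ ∃ T : Finset (ℕ → ℂ), (↑T : Set (ℕ → ℂ)) ⊆ Y ∧
    ∀ y ∈ S, ∃ t ∈ T, supDist y t < ε}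

/-- The image `A F` of the closed unit ball `F = {x ∈ X : ‖x‖ ≤ 1}` under the matrix map `A`. -/
def matImageBall (q : ℕ → ℝ) (A : ℕ → ℕ → ℂ) (X : Set (ℕ → ℂ)) : Set (ℕ → ℂ) :=
  {y | ∃ x, x ∈ X ∧ Nnorm q x ≤ 1 ∧ ∀ n,
    Tendsto (fun m => ∑ k ∈ Finset.range (m + 1), A n k * x k) atTop (𝓝 (y n))}

end

end NqDelta

/-! The map `x ↦ τ(x)` is linear, and `τ(s^{(-1)})` is the constant sequence `1` while
`τ(s^{(k)})` is the unit vector `e_k`: in both cases `q_j (Δ⁻s)_j` is a difference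
`Q_j a_j - Q_{j-1} a_{j-1}`, so the sum defining `τ_n` telescopes. Since `‖x‖` is the sup norm
of `τ(x)`, everything is transported from the space `c` of convergent sequences, where
`(1, e_0, e_1, …)` is a Schauder basis: the `m`-th remainder of the expansion of `y → l` is
`(0, …, 0, y_{m+1} - l, y_{m+2} - l, …)`, and conversely both `‖l - c‖` and the `n`-th
coefficient error of any expansion `c, λ` are bounded by the sup norm of its remainders. -/

open NqDelta

section SequenceBasis

variable {𝕜 : Type*} [NormedField 𝕜]

def partialExpansion (c : 𝕜) (lam : ℕ → 𝕜) (m : ℕ) : ℕ → 𝕜 :=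
  c • 1 + ∑ k ∈ range (m + 1), lam k • Pi.single k 1

lemma partialExpansion_apply (c : 𝕜) (lam : ℕ → 𝕜) (m n : ℕ) :
    partialExpansion c lam m n = c + if n ≤ m then lam n else 0 := by
  simp [partialExpansion, Finset.sum_apply, Pi.single_apply]

-- Boundedness matters: `⨆` of an unbounded family is the junk value `0`.
lemma norm_le_iSup_norm_of_tendsto {y : ℕ → 𝕜} {l : 𝕜} (hy : Tendsto y atTop (𝓝 l)) (n : ℕ) :
    ‖y n‖ ≤ ⨆ i, ‖y i‖ :=
  le_ciSup hy.norm.bddAbove_range n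

lemma norm_lim_le_iSup_norm {y : ℕ → 𝕜} {l : 𝕜} (hy : Tendsto y atTop (𝓝 l)) :
    ‖l‖ ≤ ⨆ i, ‖y i‖ :=
  le_of_tendsto' hy.norm (norm_le_iSup_norm_of_tendsto hy)

lemma tendsto_iSup_norm_sub_partialExpansion {y : ℕ → 𝕜} {l : 𝕜}
    (hy : Tendsto y atTop (𝓝 l)) :
    Tendsto (fun m => ⨆ n, ‖(y - partialExpansion l (fun k => y k - l) m) n‖) atTop (𝓝 0) := by
  rw [Metric.tendsto_atTop]
  intro ε hε
  obtain ⟨N, hN⟩ := Metric.tendsto_atTop.mp hy (ε / 2) (half_pos hε)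
  refine ⟨N, fun m hm => ?_⟩
  have hle : ⨆ n, ‖(y - partialExpansion l (fun k => y k - l) m) n‖ ≤ ε / 2 := by
    refine ciSup_le fun n => ?_
    rw [Pi.sub_apply, partialExpansion_apply]
    split_ifs with hn
    · simpa using (half_pos hε).le
    · simpa [← dist_eq_norm] using (hN n (by omega)).le
  rw [Real.dist_eq, sub_zero, abs_of_nonneg (Real.iSup_nonneg fun n => norm_nonneg _)]
  linarith

lemma tendsto_sub_partialExpansion {y : ℕ → 𝕜} {l : 𝕜} (hy : Tendsto y atTop (𝓝 l))
    (c : 𝕜) (lam : ℕ → 𝕜) (m : ℕ) :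
    Tendsto (y - partialExpansion c lam m) atTop (𝓝 (l - c)) := by
  refine (hy.sub_const c).congr' ?_
  filter_upwards [eventually_gt_atTop m] with n hn
  simp [partialExpansion_apply, Nat.not_le.mpr hn]

lemma eq_of_tendsto_iSup_norm_sub_partialExpansion {y : ℕ → 𝕜} {l c : 𝕜} {lam : ℕ → 𝕜}
    (hy : Tendsto y atTop (𝓝 l))
    (h : Tendsto (fun m => ⨆ n, ‖(y - partialExpansion c lam m) n‖) atTop (𝓝 0)) :
    c = l ∧ lam = fun k => y k - l := by
  have hc : c = l := by
    have : ‖l - c‖ ≤ 0 := ge_of_tendsto' h fun m =>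
      norm_lim_le_iSup_norm (tendsto_sub_partialExpansion hy c lam m)
    exact (sub_eq_zero.mp (norm_le_zero_iff.mp this)).symm
  refine ⟨hc, funext fun n => ?_⟩
  have : ‖y n - (c + lam n)‖ ≤ 0 := by
    refine ge_of_tendsto h ?_
    filter_upwards [eventually_ge_atTop n] with m hm
    simpa [partialExpansion_apply, hm] using
      norm_le_iSup_norm_of_tendsto (tendsto_sub_partialExpansion hy c lam m) n
  rw [← hc]
  linear_combination -norm_le_zero_iff.mp this

end SequenceBasis

namespace NqDelta

variable {q : ℕ → ℝ}

lemma Qs_pos (hq : ∀ k, 0 < q k) (n : ℕ) : 0 < Qs q n :=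
  Finset.sum_pos (fun i _ => hq i) nonempty_range_add_one

lemma Qs_zero : Qs q 0 = q 0 := by
  simp [Qs]

lemma Qs_succ (n : ℕ) : Qs q (n + 1) = Qs q n + q (n + 1) :=
  Finset.sum_range_succ _ _

@[simp]
lemma deltaM_zero (x : ℕ → ℂ) : deltaM x 0 = -x 0 := by
  simp [deltaM]

@[simp]
lemma deltaM_succ (x : ℕ → ℂ) (j : ℕ) : deltaM x (j + 1) = x j - x (j + 1) := by
  simp [deltaM]

lemma deltaM_add (x y : ℕ → ℂ) (k : ℕ) : deltaM (x + y) k = deltaM x k + deltaM y k := by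
  cases k <;> simp only [deltaM_zero, deltaM_succ, Pi.add_apply] <;> ring

lemma deltaM_smul (c : ℂ) (x : ℕ → ℂ) (k : ℕ) : deltaM (c • x) k = c * deltaM x k := by
  cases k <;> simp only [deltaM_zero, deltaM_succ, Pi.smul_apply, smul_eq_mul] <;> ring

noncomputable def tauLinear (q : ℕ → ℝ) : (ℕ → ℂ) →ₗ[ℂ] ℕ → ℂ where
  toFun := tau q
  map_add' x y := funext fun n => by
    simp only [tau, deltaM_add, mul_add, sum_add_distrib, Pi.add_apply]
  map_smul' c x := funext fun n => by
    simp only [tau, deltaM_smul, mul_left_comm _ c, ← mul_sum, Pi.smul_apply, smul_eq_mul,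
      RingHom.id_apply]

lemma tauLinear_apply (x : ℕ → ℂ) : tauLinear q x = tau q x := rfl

lemma tau_eq_of_qmul_deltaM (hq : ∀ k, 0 < q k) {x a : ℕ → ℂ}
    (h0 : (q 0 : ℂ) * deltaM x 0 = Qs q 0 * a 0)
    (hsucc : ∀ j, (q (j + 1) : ℂ) * deltaM x (j + 1) = Qs q (j + 1) * a (j + 1) - Qs q j * a j) :
    tau q x = a := by
  have hsum : ∀ n, ∑ k ∈ range (n + 1), (q k : ℂ) * deltaM x k = Qs q n * a n := by
    intro n
    induction n with
    | zero => simpa using h0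
    | succ n ih => rw [sum_range_succ, ih, hsucc]; ring
  ext n
  have : (Qs q n : ℂ) ≠ 0 := Complex.ofReal_ne_zero.mpr (Qs_pos hq n).ne'
  rw [tau, hsum, inv_mul_cancel_left₀ this]

lemma tau_sminus (hq : ∀ k, 0 < q k) : tau q (sminus q) = 1 := by
  refine tau_eq_of_qmul_deltaM hq ?_ fun j => ?_
  · have : (q 0 : ℂ) ≠ 0 := mod_cast (hq 0).ne'
    simp only [deltaM_zero, sminus, range_zero, sum_empty, Qs_zero, Pi.one_apply]
    push_cast
    field_simp
    ring
  · have : (q (j + 1) : ℂ) ≠ 0 := mod_cast (hq (j + 1)).ne'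
    simp only [deltaM_succ, sminus, sum_range_succ, Qs_succ, Pi.one_apply]
    push_cast
    field_simp
    ring

lemma sseq_of_lt {k n : ℕ} (h : n < k) : sseq q k n = 0 :=
  if_pos h

lemma sseq_self (k : ℕ) : sseq q k k = ((-(Qs q k / q k) : ℝ) : ℂ) := by
  simp [sseq]

lemma sseq_of_gt {k n : ℕ} (h : k < n) :
    sseq q k n = ((Qs q k * (1 / q (k + 1) - 1 / q k) : ℝ) : ℂ) := by
  simp [sseq, h.not_gt, h.ne']

lemma tau_sseq (hq : ∀ k, 0 < q k) (k : ℕ) : tau q (sseq q k) = Pi.single k 1 := by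
  have hq' : ∀ i, (q i : ℂ) ≠ 0 := fun i => mod_cast (hq i).ne'
  refine tau_eq_of_qmul_deltaM hq ?_ fun j => ?_
  · rcases Nat.eq_zero_or_pos k with rfl | hk
    · rw [deltaM_zero, sseq_self, Pi.single_eq_same, Qs_zero]
      push_cast
      field_simp [hq' 0]
    · simp [sseq_of_lt hk, hk.ne]
  rcases lt_trichotomy (j + 1) k with h | rfl | h
  · simp [sseq_of_lt h, sseq_of_lt (j.lt_succ_self.trans h), h.ne, (j.lt_succ_self.trans h).ne]
  · rw [deltaM_succ, sseq_of_lt j.lt_succ_self, sseq_self, Pi.single_eq_same,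
      Pi.single_eq_of_ne j.lt_succ_self.ne]
    push_cast
    field_simp [hq' (j + 1)]
    ring
  rcases (Nat.lt_succ_iff.mp h).eq_or_lt with rfl | h'
  · rw [deltaM_succ, sseq_self, sseq_of_gt h, Pi.single_eq_same,
      Pi.single_eq_of_ne k.succ_ne_self]
    push_cast
    field_simp [hq' k, hq' (k + 1)]
    ring
  · simp [sseq_of_gt h, sseq_of_gt h', h.ne', h'.ne']

lemma tau_sub_partialExpansion (hq : ∀ k, 0 < q k) (x : ℕ → ℂ) (c : ℂ) (lam : ℕ → ℂ) (m : ℕ) :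
    tau q (x - (c • sminus q + ∑ k ∈ range (m + 1), lam k • sseq q k))
      = tau q x - partialExpansion c lam m := by
  simp only [← tauLinear_apply, map_sub, map_add, map_smul, map_sum]
  simp only [tauLinear_apply, tau_sminus hq, tau_sseq hq, partialExpansion]

end NqDelta

/-- `{s^{(-1)}} ∪ {s^{(k)} : k ∈ ℕ}` is a Schauder basis of `(N̄^q_{Δ⁻})`:
every `x` in the space has the unique representation
`x = l·s^{(-1)} + ∑_k (λ_k - l) s^{(k)}` with `λ_k = τ_k(x)` and `l = lim_k τ_k(x)`,
the partial sums converging to `x` in the norm `‖x‖ = sup_n |τ_n(x)|`. -/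
theorem stmt_4 (q : ℕ → ℝ) (hq : ∀ k, 0 < q k) :
    (sminus q ∈ Nconv q) ∧ (∀ k, sseq q k ∈ Nconv q) ∧
    ∀ x ∈ Nconv q, ∀ l : ℂ, Tendsto (tau q x) atTop (𝓝 l) →
      -- existence of the representation
      (Tendsto (fun m => Nnorm q (x - (l • sminus q +
          ∑ k ∈ Finset.range (m + 1), (tau q x k - l) • sseq q k))) atTop (𝓝 0)) ∧
      -- uniqueness of the representation
      (∀ (c : ℂ) (lam : ℕ → ℂ),
        Tendsto (fun m => Nnorm q (x - (c • sminus q +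
            ∑ k ∈ Finset.range (m + 1), lam k • sseq q k))) atTop (𝓝 0) →
        c = l ∧ lam = fun k => tau q x k - l) := by
  refine ⟨⟨1, ?_⟩, fun k => ⟨0, ?_⟩, fun x _ l hl => ⟨?_, fun c lam h => ?_⟩⟩
  · rw [tau_sminus hq]
    exact tendsto_const_nhds
  · rw [tau_sseq hq]
    exact tendsto_const_nhds.congr' <| (eventually_gt_atTop k).mono fun n hn => by
      simp [hn.ne']
  · simpa only [Nnorm, tau_sub_partialExpansion hq] using tendsto_iSup_norm_sub_partialExpansion hl
  · simp only [Nnorm, tau_sub_partialExpansion hq] at h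
    exact eq_of_tendsto_iSup_norm_sub_partialExpansion hl h
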